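/- Let T be the tree consisting of the path u1u2u3u4u5 together with a pendant path u3u'3u''3 at u3 and two additional leaves v3, v'3 adjacent to u''3. If L is a list assignment with |L(u1)| ≥ 2, |L(u2)| ≥ 3, |L(u3)| ≥ 3, |L(u4)| ≥ 4, |L(u5)| ≥ 2, |L(u'3)| ≥ 5, |L(u''3)| ≥ 4, |L(v3)| ≥ 3, |L(v'3)| ≥ 2, then T admits a 2-distance L-coloring. -/

import Mathlib

/-! Colour greedily in the order u1, u3, u5, u2, u4: each of these vertices has more colours than
coloured vertices within distance 2. What is left is the clique u'3, u''3, v3, v'3 of the square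
of the tree, with residual lists of sizes at least 2, 3, 3, 2. By Hall's theorem such lists have
distinct representatives as soon as the lists of u''3 and v3 together still hold 4 colours; the
colour of u3 can spoil this only if it is the one colour κ of L(u''3) outside L(v3), and u3 has
room to avoid κ as well. -/

/-- The tree of the corresponding configuration, with vertices 0 = u1, 1 = u2, 2 = u3, 3 = u4, 4 = u5, 5 = u'3, 6 = u''3, 7 = v3, 8 = v'3. -/
def T10 : SimpleGraph (Fin 9) :=
  SimpleGraph.fromRel (fun u v => (u = 0 ∧ v = 1) ∨ (u = 1 ∧ v = 2) ∨ (u = 2 ∧ v = 3) ∨ (u = 3 ∧ v = 4) ∨ (u = 2 ∧ v = 5) ∨ (u = 5 ∧ v = 6) ∨ (u = 6 ∧ v = 7) ∨ (u = 6 ∧ v = 8))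

instance : DecidableRel T10.Adj := fun _ _ => decidable_of_iff' _ (SimpleGraph.fromRel_adj _ _ _)

namespace Finset

variable {α : Type*} [DecidableEq α]

theorem exists_mem_ne_ne {s : Finset α} (hs : 2 < #s) (a b : α) :
    ∃ x ∈ s, x ≠ a ∧ x ≠ b := by
  obtain ⟨x, hxs, hx⟩ := exists_mem_notMem_of_card_lt_card (card_le_two.trans_lt hs)
  simp only [mem_insert, mem_singleton, not_or] at hx
  exact ⟨x, hxs, hx⟩

theorem exists_mem_ne_ne_ne {s : Finset α} (hs : 3 < #s) (a b c : α) :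
    ∃ x ∈ s, x ≠ a ∧ x ≠ b ∧ x ≠ c := by
  obtain ⟨x, hxs, hx⟩ := exists_mem_notMem_of_card_lt_card (card_le_three.trans_lt hs)
  simp only [mem_insert, mem_singleton, not_or] at hx
  exact ⟨x, hxs, hx⟩

theorem exists_mem_mem_ne_of_two_le_card_union {s t : Finset α} (hs : s.Nonempty)
    (ht : t.Nonempty) (hst : 2 ≤ #(s ∪ t)) : ∃ x ∈ s, ∃ y ∈ t, x ≠ y := by
  obtain ⟨y, hy⟩ := ht
  by_cases hsy : s ⊆ {y}
  · have hst' : s ∪ t = t := union_eq_right.2 (hsy.trans (singleton_subset_iff.2 hy))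
    obtain ⟨y', hy', hy'y⟩ := exists_mem_ne (hst' ▸ hst) y
    obtain ⟨x, hx⟩ := hs
    exact ⟨x, hx, y', hy', (mem_singleton.1 (hsy hx)).trans_ne hy'y.symm⟩
  · obtain ⟨x, hx, hxy⟩ := not_subset.1 hsy
    exact ⟨x, hx, y, hy, mem_singleton.not.1 hxy⟩

theorem exists_forall_ne_le_card_erase_union {n : ℕ} {s t : Finset α} (hs : n + 1 ≤ #s)
    (ht : n ≤ #t) : ∃ κ, ∀ x, x ≠ κ → n + 1 ≤ #(s.erase x ∪ t) := by
  by_cases hst : s ⊆ t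
  · obtain ⟨κ, -⟩ := card_pos.1 (by omega : 0 < #s)
    refine ⟨κ, fun x _ => hs.trans (card_le_card ?_)⟩
    rw [union_eq_right.2 ((erase_subset x s).trans hst)]
    exact hst
  · obtain ⟨κ, hκs, hκt⟩ := not_subset.1 hst
    refine ⟨κ, fun x hxκ => ?_⟩
    calc n + 1 ≤ #(insert κ t) := by rw [card_insert_of_notMem hκt]; omega
      _ ≤ #(s.erase x ∪ t) :=
        card_le_card (insert_subset (mem_union_left t (mem_erase.2 ⟨hxκ.symm, hκs⟩))
          subset_union_right)

theorem exists_distinct_mem_four_of_le_card_union {A B C D : Finset α} (hA : 2 ≤ #A)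
    (hB : 3 ≤ #B) (hC : 3 ≤ #C) (hD : 2 ≤ #D) (hBC : 4 ≤ #(B ∪ C)) :
    ∃ a ∈ A, ∃ b ∈ B, ∃ c ∈ C, ∃ d ∈ D,
      a ≠ b ∧ a ≠ c ∧ a ≠ d ∧ b ≠ c ∧ b ≠ d ∧ c ≠ d := by
  obtain ⟨d, hd⟩ := card_pos.1 (by omega : 0 < #D)
  obtain ⟨a, ha, had⟩ := exists_mem_ne hA d
  have hsdiff (s : Finset α) : #s - 2 ≤ #(s \ {a, d}) :=
    (Nat.sub_le_sub_left card_le_two _).trans (le_card_sdiff _ _)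
  have hB' : (B \ {a, d}).Nonempty := card_pos.1 (by have := hsdiff B; omega)
  have hC' : (C \ {a, d}).Nonempty := card_pos.1 (by have := hsdiff C; omega)
  have hBC' : 2 ≤ #(B \ {a, d} ∪ C \ {a, d}) := by
    rw [← union_sdiff_distrib]; have := hsdiff (B ∪ C); omega
  obtain ⟨b, hb, c, hc, hbc⟩ := exists_mem_mem_ne_of_two_le_card_union hB' hC' hBC'
  simp only [mem_sdiff, mem_insert, mem_singleton, not_or] at hb hc
  exact ⟨a, ha, b, hb.1, c, hc.1, d, hd, Ne.symm hb.2.1, Ne.symm hc.2.1, had, hbc,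
    hb.2.2, hc.2.2⟩

end Finset

open Finset

theorem T10.apply_ne_of_adj_or_adj_adj {β : Type*} {c : Fin 9 → β} (h01 : c 0 ≠ c 1)
    (h02 : c 0 ≠ c 2) (h12 : c 1 ≠ c 2) (h13 : c 1 ≠ c 3) (h15 : c 1 ≠ c 5) (h23 : c 2 ≠ c 3)
    (h24 : c 2 ≠ c 4) (h25 : c 2 ≠ c 5) (h26 : c 2 ≠ c 6) (h34 : c 3 ≠ c 4) (h35 : c 3 ≠ c 5)
    (h56 : c 5 ≠ c 6) (h57 : c 5 ≠ c 7) (h58 : c 5 ≠ c 8) (h67 : c 6 ≠ c 7) (h68 : c 6 ≠ c 8)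
    (h78 : c 7 ≠ c 8) (u v : Fin 9) (huv : u ≠ v)
    (hdist : T10.Adj u v ∨ ∃ w, T10.Adj u w ∧ T10.Adj w v) : c u ≠ c v := by
  fin_cases u <;> fin_cases v <;> first
    | exact absurd hdist (by decide)
    | exact absurd rfl huv
    | assumption
    | exact Ne.symm ‹_›

/-- The configuration admits a 2-distance coloring from the given lists. -/
theorem colorable_vi (L : Fin 9 → Finset ℕ)
    (h0 : 2 ≤ (L 0).card)
    (h1 : 3 ≤ (L 1).card)
    (h2 : 3 ≤ (L 2).card)
    (h3 : 4 ≤ (L 3).card)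
    (h4 : 2 ≤ (L 4).card)
    (h5 : 5 ≤ (L 5).card)
    (h6 : 4 ≤ (L 6).card)
    (h7 : 3 ≤ (L 7).card)
    (h8 : 2 ≤ (L 8).card) :
    ∃ φ : Fin 9 → ℕ, (∀ v, φ v ∈ L v) ∧
      ∀ u v : Fin 9, u ≠ v →
        (T10.Adj u v ∨ ∃ w, T10.Adj u w ∧ T10.Adj w v) → φ u ≠ φ v := by
  obtain ⟨κ, hκ⟩ := exists_forall_ne_le_card_erase_union h6 h7
  obtain ⟨c0, m0⟩ := card_pos.1 (by omega : 0 < #(L 0))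
  obtain ⟨c2, m2, h20, h2κ⟩ := exists_mem_ne_ne h2 c0 κ
  obtain ⟨c4, m4, h42⟩ := exists_mem_ne h4 c2
  obtain ⟨c1, m1, h10, h12⟩ := exists_mem_ne_ne h1 c0 c2
  obtain ⟨c3, m3, h31, h32, h34⟩ := exists_mem_ne_ne_ne h3 c1 c2 c4
  have hA : 2 ≤ #(L 5 \ {c1, c2, c3}) := by
    have := le_card_sdiff {c1, c2, c3} (L 5); have := card_le_three (a := c1) (b := c2) (c := c3)
    omega
  have hB : 3 ≤ #((L 6).erase c2) := by have := pred_card_le_card_erase (s := L 6) (a := c2); omega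
  obtain ⟨c5, m5, c6, m6, c7, m7, c8, m8, h56, h57, h58, h67, h68, h78⟩ :=
    exists_distinct_mem_four_of_le_card_union hA hB h7 h8 (hκ c2 h2κ)
  obtain ⟨m5, h5⟩ := mem_sdiff.1 m5
  simp only [mem_insert, mem_singleton, not_or] at h5
  obtain ⟨h62, m6⟩ := mem_erase.1 m6
  refine ⟨![c0, c1, c2, c3, c4, c5, c6, c7, c8], fun v => by fin_cases v <;> assumption, ?_⟩
  exact T10.apply_ne_of_adj_or_adj_adj h10.symm h20.symm h12 h31.symm (Ne.symm h5.1) h32.symm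
    h42.symm (Ne.symm h5.2.1) h62.symm h34 (Ne.symm h5.2.2) h56 h57 h58 h67 h68 h78
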